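/- Let n, m ≥ 2 and let F : ℝ₊ⁿ → Sₘ be continuously differentiable, convex and monotonically non-increasing. Let x ∈ ℝ₊ⁿ be such that F'(x)((n−1)e_j' − e_j) ⋠ 0 for all j ∈ {1,…,n}, and set λ := min over j ∈ {1,…,n} of λ_max(F'(x)((n−1)e_j' − e_j)). Then for every d ∈ ℝⁿ: if λ_max(F'(x)d) < λ‖d‖∞/(n−1), then Σ_{j=1}ⁿ d_j > 0. -/

import Mathlib

attribute [local instance] Matrix.frobeniusNormedAddCommGroup Matrix.frobeniusNormedSpace

noncomputable section

/-- The open positive orthant `ℝ₊ⁿ` in `ℝⁿ`. -/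
def posOrth (n : ℕ) : Set (Fin n → ℝ) := {x | ∀ i, 0 < x i}

/-- The Loewner order on real matrices: `A ⪯ B` iff `B - A` is positive semidefinite. -/
def loewnerLE {m : ℕ} (A B : Matrix (Fin m) (Fin m) ℝ) : Prop := (B - A).PosSemidef

/-- The largest eigenvalue `λ_max` of a real (symmetric) matrix. -/
noncomputable def lambdaMax {m : ℕ} (A : Matrix (Fin m) (Fin m) ℝ) : ℝ :=
  sSup {r : ℝ | ∃ v : Fin m → ℝ, v ≠ 0 ∧ A.mulVec v = r • v}

/-- The spectral norm `‖·‖₂` of a real matrix (operator norm on Euclidean space). -/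
noncomputable def matSpectralNorm {m : ℕ} (A : Matrix (Fin m) (Fin m) ℝ) : ℝ :=
  ‖LinearMap.toContinuousLinearMap (Matrix.toEuclideanLin A)‖

/-- `e_j`, the `j`-th standard unit vector of `ℝⁿ`. -/
def unitVec (n : ℕ) (j : Fin n) : Fin n → ℝ := Pi.single j 1

/-- `e_j' = 𝟙 - e_j`. -/
def coVec (n : ℕ) (j : Fin n) : Fin n → ℝ := (fun _ => (1:ℝ)) - Pi.single j 1

/-- The direction `(n-1) e_j' - e_j`. -/
noncomputable def dirVec (n : ℕ) (j : Fin n) : Fin n → ℝ :=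
  ((n:ℝ) - 1) • coVec n j - unitVec n j

/-- `z_{j,k} = (a/2) e_j' + (a + k·a/(4(n-1))) e_j`. -/
noncomputable def zVec (n : ℕ) (a : ℝ) (j : Fin n) (k : ℤ) : Fin n → ℝ :=
  (a/2) • coVec n j + (a + (k:ℝ) * a / (4 * ((n:ℝ) - 1))) • unitVec n j

/-- `d_j = ((2b-a)/a)(n-1) e_j' - (1/2) e_j`. -/
noncomputable def dVec (n : ℕ) (a b : ℝ) (j : Fin n) : Fin n → ℝ :=
  ((2*b - a)/a * ((n:ℝ) - 1)) • coVec n j - (1/2 : ℝ) • unitVec n j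

/-- `K = ⌈4(n-1)b/a⌉ - 4n - 3`. -/
noncomputable def Kbound (n : ℕ) (a b : ℝ) : ℤ := ⌈4 * ((n:ℝ) - 1) * b / a⌉ - 4 * (n:ℤ) - 3

/-! If `∑ d ≤ 0`, some coordinate has `d j ≤ -t` with `t = ‖d‖∞ / (n - 1)`, while every
coordinate is at most `(n - 1) t`; hence `t ((n - 1) e_j' - e_j) - d ≥ 0`. Monotonicity of `F`
turns this into `t F'(x)((n - 1) e_j' - e_j) ⪯ F'(x) d`. Since `λ_max` is the top of the spectrum,
it is monotone for the Loewner order and positively homogeneous, so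
`λ ‖d‖∞ / (n - 1) ≤ t λ_max(F'(x)((n - 1) e_j' - e_j)) ≤ λ_max(F'(x) d)`. -/

open Matrix Module.End

namespace Matrix

variable {m : ℕ}

lemma setOf_exists_mulVec_eq_smul_eq_spectrum (A : Matrix (Fin m) (Fin m) ℝ) :
    {r : ℝ | ∃ v : Fin m → ℝ, v ≠ 0 ∧ A *ᵥ v = r • v} = spectrum ℝ A := by
  ext r
  rw [← spectrum_toLin', ← hasEigenvalue_iff_mem_spectrum]
  constructor
  · rintro ⟨v, hv, hAv⟩
    exact hasEigenvalue_of_hasEigenvector ⟨mem_eigenspace_iff.2 (by simpa using hAv), hv⟩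
  · intro h
    obtain ⟨v, hv⟩ := h.exists_hasEigenvector
    exact ⟨v, hv.2, by simpa using mem_eigenspace_iff.1 hv.1⟩

lemma lambdaMax_eq_sSup_spectrum (A : Matrix (Fin m) (Fin m) ℝ) :
    lambdaMax A = sSup (spectrum ℝ A) := by
  rw [lambdaMax, setOf_exists_mulVec_eq_smul_eq_spectrum]

lemma IsHermitian.spectrum_nonempty [NeZero m] {A : Matrix (Fin m) (Fin m) ℝ}
    (hA : A.IsHermitian) : (spectrum ℝ A).Nonempty := by
  rw [hA.spectrum_real_eq_range_eigenvalues]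
  exact Set.range_nonempty _

lemma IsHermitian.lambdaMax_mem_spectrum [NeZero m] {A : Matrix (Fin m) (Fin m) ℝ}
    (hA : A.IsHermitian) : lambdaMax A ∈ spectrum ℝ A := by
  rw [lambdaMax_eq_sSup_spectrum]
  exact hA.spectrum_nonempty.csSup_mem A.finite_real_spectrum

lemma le_of_mem_spectrum_of_posSemidef {n : Type*} [Fintype n] [DecidableEq n]
    {A : Matrix n n ℝ} {μ r : ℝ} (h : (algebraMap ℝ _ μ - A).PosSemidef)
    (hr : r ∈ spectrum ℝ A) : r ≤ μ := by
  have : μ - r ∈ spectrum ℝ (algebraMap ℝ _ μ - A) := by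
    rw [← spectrum.singleton_sub_eq]
    exact Set.sub_mem_sub rfl hr
  exact sub_nonneg.1 ((posSemidef_iff_isHermitian_and_spectrum_nonneg.1 h).2 this)

lemma IsHermitian.posSemidef_algebraMap_lambdaMax_sub {A : Matrix (Fin m) (Fin m) ℝ}
    (hA : A.IsHermitian) : (algebraMap ℝ _ (lambdaMax A) - A).PosSemidef := by
  have hμ : (algebraMap ℝ (Matrix (Fin m) (Fin m) ℝ) (lambdaMax A)).IsHermitian := by
    rw [algebraMap_eq_diagonal]
    exact isHermitian_diagonal _
  refine posSemidef_iff_isHermitian_and_spectrum_nonneg.2 ⟨hμ.sub hA, ?_⟩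
  rw [← spectrum.singleton_sub_eq, Set.singleton_sub]
  rintro _ ⟨r, hr, rfl⟩
  rw [lambdaMax_eq_sSup_spectrum]
  exact sub_nonneg.2 (le_csSup A.finite_real_spectrum.bddAbove hr)

lemma lambdaMax_le_lambdaMax_of_loewnerLE [NeZero m] {A B : Matrix (Fin m) (Fin m) ℝ}
    (hA : A.IsHermitian) (hB : B.IsHermitian) (hAB : loewnerLE A B) :
    lambdaMax A ≤ lambdaMax B := by
  refine le_of_mem_spectrum_of_posSemidef ?_ hA.lambdaMax_mem_spectrum
  simpa using hB.posSemidef_algebraMap_lambdaMax_sub.add hAB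

lemma IsHermitian.lambdaMax_smul [NeZero m] {A : Matrix (Fin m) (Fin m) ℝ} (hA : A.IsHermitian)
    {t : ℝ} (ht : 0 ≤ t) : lambdaMax (t • A) = t * lambdaMax A := by
  rw [lambdaMax_eq_sSup_spectrum, lambdaMax_eq_sSup_spectrum,
    spectrum.smul_eq_smul _ _ hA.spectrum_nonempty, Real.sSup_smul_of_nonneg ht, smul_eq_mul]

end Matrix

lemma exists_le_neg_norm_div_of_sum_nonpos {n : ℕ} (hn : 2 ≤ n) {d : Fin n → ℝ}
    (hd : ∑ i, d i ≤ 0) : ∃ j, d j ≤ -(‖d‖ / ((n : ℝ) - 1)) := by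
  have hn1 : (1 : ℝ) ≤ n - 1 := by
    have : (2 : ℝ) ≤ n := by exact_mod_cast hn
    linarith
  have : Nontrivial (Fin n) := Fin.nontrivial_iff_two_le.2 hn
  obtain ⟨k, hk⟩ := Finite.exists_max fun i => |d i|
  have hnorm : ‖d‖ = |d k| :=
    le_antisymm ((pi_norm_le_iff_of_nonneg (abs_nonneg _)).2 fun i => hk i)
      (norm_le_pi_norm d k)
  by_contra! hlt
  rcases abs_cases (d k) with ⟨hdk, -⟩ | ⟨hdk, -⟩
  · have hcard : ((Finset.univ.erase k).card : ℝ) = n - 1 := by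
      rw [Finset.card_erase_of_mem (Finset.mem_univ k), Finset.card_univ, Fintype.card_fin,
        Nat.cast_sub (by omega), Nat.cast_one]
    have hrest : -‖d‖ < ∑ i ∈ Finset.univ.erase k, d i :=
      calc -‖d‖ = ∑ _i ∈ Finset.univ.erase k, -(‖d‖ / ((n : ℝ) - 1)) := by
            rw [Finset.sum_const, nsmul_eq_mul, hcard]
            field_simp
        _ < ∑ i ∈ Finset.univ.erase k, d i :=
            Finset.sum_lt_sum_of_nonempty
              Finset.univ_nontrivial.erase_nonempty fun i _ => hlt i
    rw [← Finset.add_sum_erase _ _ (Finset.mem_univ k)] at hd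
    linarith
  · have := div_le_self (norm_nonneg d) hn1
    linarith [hlt k]

lemma dirVec_apply {n : ℕ} (j i : Fin n) :
    dirVec n j i = if i = j then -1 else (n : ℝ) - 1 := by
  by_cases h : i = j <;> simp [dirVec, coVec, unitVec, h]

lemma le_smul_dirVec {n : ℕ} {d : Fin n → ℝ} {t : ℝ} {j : Fin n} (hj : d j ≤ -t)
    (hd : ∀ i, d i ≤ ((n : ℝ) - 1) * t) : d ≤ t • dirVec n j := by
  intro i
  rw [Pi.smul_apply, dirVec_apply, smul_eq_mul]
  split_ifs with h
  · subst h; linarith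
  · linarith [hd i]

theorem sum_pos_of_lambdaMax_lt_general {n m : ℕ} (hn : 2 ≤ n) (hm : 2 ≤ m)
    (F' : (Fin n → ℝ) → (Fin n → ℝ) →L[ℝ] Matrix (Fin m) (Fin m) ℝ)
    (hF'_symm : ∀ x ∈ posOrth n, ∀ d : Fin n → ℝ, (F' x d).IsSymm)
    (hmono : ∀ x ∈ posOrth n, ∀ d : Fin n → ℝ, 0 ≤ d → loewnerLE (F' x d) 0)
    (x : Fin n → ℝ) (hx : x ∈ posOrth n)
    (lam : ℝ) (hlam : IsLeast {r : ℝ | ∃ j : Fin n, r = lambdaMax (F' x (dirVec n j))} lam) :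
    ∀ d : Fin n → ℝ, lambdaMax (F' x d) < lam * ‖d‖ / ((n:ℝ) - 1) → 0 < ∑ j, d j := by
  have : NeZero m := ⟨by omega⟩
  have hherm : ∀ d, (F' x d).IsHermitian := fun d => isHermitian_iff_isSymm.2 (hF'_symm x hx d)
  have hn1 : (0 : ℝ) < n - 1 := by
    have : (2 : ℝ) ≤ n := by exact_mod_cast hn
    linarith
  intro d hd
  by_contra! hsum
  obtain ⟨j, hj⟩ := exists_le_neg_norm_div_of_sum_nonpos hn hsum
  set t := ‖d‖ / ((n : ℝ) - 1)
  have ht : 0 ≤ t := by positivity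
  have hdt : d ≤ t • dirVec n j := le_smul_dirVec hj fun i =>
    (le_abs_self (d i)).trans <| (norm_le_pi_norm d i).trans_eq (mul_div_cancel₀ _ hn1.ne').symm
  have hle : loewnerLE (t • F' x (dirVec n j)) (F' x d) := by
    simpa [loewnerLE, map_sub, map_smul] using hmono x hx _ (sub_nonneg.2 hdt)
  have hlam_le : lam * ‖d‖ / ((n : ℝ) - 1) ≤ lambdaMax (F' x d) :=
    calc lam * ‖d‖ / ((n : ℝ) - 1) = t * lam := by ring
      _ ≤ t * lambdaMax (F' x (dirVec n j)) := mul_le_mul_of_nonneg_left (hlam.2 ⟨j, rfl⟩) ht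
      _ = lambdaMax (t • F' x (dirVec n j)) := ((hherm _).lambdaMax_smul ht).symm
      _ ≤ lambdaMax (F' x d) := lambdaMax_le_lambdaMax_of_loewnerLE
            ((hherm _).smul (IsSelfAdjoint.all t)) (hherm d) hle
  exact hd.not_ge hlam_le

/-- Lemma 2, (8). If `F'(x)((n-1)e_j' - e_j) ⋠ 0` for all `j` and
`λ := min_j λ_max(F'(x)((n-1)e_j' - e_j))`, then `λ_max(F'(x)d) < λ‖d‖_∞/(n-1)` implies
`∑ d_j > 0`. -/
theorem sum_pos_of_lambdaMax_lt {n m : ℕ} (hn : 2 ≤ n) (hm : 2 ≤ m)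
    (F : (Fin n → ℝ) → Matrix (Fin m) (Fin m) ℝ)
    (F' : (Fin n → ℝ) → (Fin n → ℝ) →L[ℝ] Matrix (Fin m) (Fin m) ℝ)
    (hF_symm : ∀ x ∈ posOrth n, (F x).IsSymm)
    (hF'_symm : ∀ x ∈ posOrth n, ∀ d : Fin n → ℝ, (F' x d).IsSymm)
    (hderiv : ∀ x ∈ posOrth n, HasFDerivAt F (F' x) x)
    (hcont : ContinuousOn F' (posOrth n))
    (hmono : ∀ x ∈ posOrth n, ∀ d : Fin n → ℝ, 0 ≤ d → loewnerLE (F' x d) 0)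
    (hconv : ∀ x ∈ posOrth n, ∀ x₀ ∈ posOrth n, loewnerLE (F' x₀ (x - x₀)) (F x - F x₀))
    (x : Fin n → ℝ) (hx : x ∈ posOrth n)
    (hcrit : ∀ j : Fin n, ¬ loewnerLE (F' x (dirVec n j)) 0)
    (lam : ℝ) (hlam : IsLeast {r : ℝ | ∃ j : Fin n, r = lambdaMax (F' x (dirVec n j))} lam) :
    ∀ d : Fin n → ℝ, lambdaMax (F' x d) < lam * ‖d‖ / ((n:ℝ) - 1) → 0 < ∑ j, d j :=
  sum_pos_of_lambdaMax_lt_general hn hm F' hF'_symm hmono x hx lam hlam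

end
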